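/- arXiv:2011.10163 — 2 statements merged into one kernel-verified Lean document; each statement's English description precedes it below -/
import Mathlib

section
/- (Ky Fan / PCA optimality) Let S ∈ ℝ^{d×d} be a symmetric matrix with eigenvalues λ_1 ≥ λ_2 ≥ … ≥ λ_d, and let 1 ≤ m ≤ d. Then the maximum of tr(WᵀSW) over all W ∈ ℝ^{d×m} with WᵀW = I_m equals λ_1 + λ_2 + … + λ_m, and it is attained when the columns of W are m orthonormal eigenvectors of S corresponding to the m largest eigenvalues. In particular, for the PCA total scatter matrix S = XHXᵀ (X ∈ ℝ^{d×n}, H the centralisation matrix), the PCA problem max_{WᵀW=I_m} tr(WᵀXHXᵀW) is solved by the top-m eigenvectors of XHXᵀ, with optimal value the sum of its m largest eigenvalues. -/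
/-!
With `U = Vᵀ W`, which again has orthonormal columns, `tr (Wᵀ S W) = ∑ i, λ i * p i` for the
weights `p i = ∑ j, U i j ^ 2`. They satisfy `0 ≤ p i ≤ 1` (since `U Uᵀ` is an orthogonal
projection) and `∑ i, p i = m`, and against a decreasing `λ` such weights do best by putting
weight one on the first `m` indices. The first `m` columns of `V` realise that value.
-/

open Matrix

/-- The centralisation matrix `H = I - (1/n) N`, where `N` is the all-ones matrix. -/
noncomputable def centMat (n : ℕ) : Matrix (Fin n) (Fin n) ℝ :=
  1 - (1 / (n : ℝ)) • Matrix.of (fun _ _ => (1 : ℝ))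

section Weights

variable {ι R : Type*} [Fintype ι] [CommRing R] [LinearOrder R] [IsStrictOrderedRing R]

theorem Finset.sum_mul_le_sum_of_threshold (s : Finset ι) {f p : ι → R} (c : R)
    (hfs : ∀ i ∈ s, c ≤ f i) (hfsc : ∀ i ∉ s, f i ≤ c)
    (hp0 : ∀ i, 0 ≤ p i) (hp1 : ∀ i, p i ≤ 1) (hps : ∑ i, p i = s.card) :
    ∑ i, f i * p i ≤ ∑ i ∈ s, f i := by
  classical
  have hpoint (i : ι) : f i * p i ≤ c * p i + if i ∈ s then f i - c else 0 := by
    split_ifs with hi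
    · nlinarith [hfs i hi, hp1 i]
    · nlinarith [hfsc i hi, hp0 i]
  calc ∑ i, f i * p i ≤ ∑ i, (c * p i + if i ∈ s then f i - c else 0) :=
        Finset.sum_le_sum fun i _ => hpoint i
    _ = ∑ i ∈ s, f i := by
        rw [Finset.sum_add_distrib, ← Finset.mul_sum, hps, Finset.sum_ite_mem, Finset.univ_inter,
          Finset.sum_sub_distrib, Finset.sum_const, nsmul_eq_mul]
        ring

theorem Antitone.sum_mul_le_sum_castLE {d m : ℕ} (hm1 : 1 ≤ m) (hm : m ≤ d) {lam : Fin d → R}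
    (hlam : Antitone lam) {p : Fin d → R} (hp0 : ∀ i, 0 ≤ p i) (hp1 : ∀ i, p i ≤ 1)
    (hps : ∑ i, p i = m) :
    ∑ i, lam i * p i ≤ ∑ i : Fin m, lam (Fin.castLE hm i) := by
  let top : Fin m ↪ Fin d := ⟨Fin.castLE hm, Fin.castLE_injective hm⟩
  have hmem (i : Fin d) : i ∈ Finset.univ.map top ↔ (i : ℕ) < m :=
    ⟨fun hi => by obtain ⟨j, -, rfl⟩ := Finset.mem_map.1 hi; exact j.2,
      fun hi => Finset.mem_map.2 ⟨⟨i, hi⟩, Finset.mem_univ _, rfl⟩⟩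
  rw [show ∑ i : Fin m, lam (Fin.castLE hm i) = ∑ i ∈ Finset.univ.map top, lam i from
    (Finset.sum_map Finset.univ top lam).symm]
  refine Finset.sum_mul_le_sum_of_threshold _ (lam ⟨m - 1, by omega⟩) (fun i hi => ?_)
    (fun i hi => ?_) hp0 hp1 (by simpa using hps)
  · exact hlam (Fin.le_def.2 (by have := (hmem i).1 hi; dsimp only; omega))
  · exact hlam (Fin.le_def.2 (by have := mt (hmem i).2 hi; dsimp only; omega))

end Weights

namespace Matrix

variable {m n R : Type*} [Fintype m] [Fintype n]

theorem trace_transpose_mul_diagonal_mul [CommSemiring R] [DecidableEq n] (U : Matrix n m R)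
    (lam : n → R) : trace (Uᵀ * diagonal lam * U) = ∑ i, lam i * ∑ j, U i j ^ 2 := by
  rw [Matrix.mul_assoc]
  simp only [trace, diag_apply, mul_apply, transpose_apply, diagonal_apply, ite_mul, zero_mul,
    Finset.sum_ite_eq, Finset.mem_univ, if_true, Finset.mul_sum]
  rw [Finset.sum_comm]
  exact Finset.sum_congr rfl fun i _ => Finset.sum_congr rfl fun j _ => by ring

theorem sum_sum_sq_eq_card_of_transpose_mul_self_eq_one [CommSemiring R] [DecidableEq m]
    {U : Matrix n m R} (hU : Uᵀ * U = 1) : ∑ i, ∑ j, U i j ^ 2 = Fintype.card m := by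
  rw [← trace_one, ← hU, Finset.sum_comm]
  simp only [trace, diag_apply, mul_apply, transpose_apply, sq]

theorem sum_sq_row_le_one_of_transpose_mul_self_eq_one [CommRing R] [LinearOrder R]
    [IsStrictOrderedRing R] [DecidableEq m] {U : Matrix n m R} (hU : Uᵀ * U = 1) (i : n) :
    ∑ j, U i j ^ 2 ≤ 1 := by
  -- `P = U Uᵀ` is a symmetric idempotent, so `P i i = (P * P) i i ≥ P i i ^ 2`.
  set P := U * Uᵀ with hP
  have hPP : P * P = P := by rw [hP, Matrix.mul_assoc, ← Matrix.mul_assoc Uᵀ, hU, Matrix.one_mul]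
  have hPt : Pᵀ = P := by rw [hP, transpose_mul, transpose_transpose]
  have hPsymm (a b : n) : P b a = P a b := congrFun (congrFun hPt a) b
  have hPii : P i i = ∑ j, U i j ^ 2 := by simp only [hP, mul_apply, transpose_apply, sq]
  have hsq : P i i ^ 2 ≤ P i i :=
    calc P i i ^ 2 ≤ ∑ j, P i j ^ 2 :=
          Finset.single_le_sum (fun j _ => sq_nonneg (P i j)) (Finset.mem_univ i)
      _ = P i i := by
          conv_rhs => rw [← hPP, mul_apply]
          simp only [hPsymm _ i, sq]
  have h0 : 0 ≤ P i i := hPii ▸ Finset.sum_nonneg fun j _ => sq_nonneg _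
  rw [← hPii]
  nlinarith

theorem transpose_submatrix_mul_mul_submatrix {p q l : Type*} [Fintype p] [CommSemiring R]
    (V : Matrix p q R) (M : Matrix p p R) (f : l → q) :
    (V.submatrix id f)ᵀ * M * V.submatrix id f = (Vᵀ * M * V).submatrix f f := by
  rw [submatrix_mul _ _ _ id _ Function.bijective_id,
    submatrix_mul _ _ _ id _ Function.bijective_id, transpose_submatrix, submatrix_id_id]

theorem trace_transpose_mul_diagonal_mul_le_sum_castLE [CommRing R] [LinearOrder R]
    [IsStrictOrderedRing R] {d k : ℕ} (hk1 : 1 ≤ k) (hk : k ≤ d) {lam : Fin d → R}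
    (hlam : Antitone lam) {U : Matrix (Fin d) (Fin k) R} (hU : Uᵀ * U = 1) :
    trace (Uᵀ * diagonal lam * U) ≤ ∑ i : Fin k, lam (Fin.castLE hk i) := by
  rw [trace_transpose_mul_diagonal_mul]
  refine hlam.sum_mul_le_sum_castLE hk1 hk (fun i => Finset.sum_nonneg fun j _ => sq_nonneg _)
    (sum_sq_row_le_one_of_transpose_mul_self_eq_one hU) ?_
  simpa using sum_sum_sq_eq_card_of_transpose_mul_self_eq_one hU

end Matrix

theorem ky_fan_pca_general (d m : ℕ) (hm1 : 1 ≤ m) (hm : m ≤ d)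
    (S : Matrix (Fin d) (Fin d) ℝ)
    (lam : Fin d → ℝ) (V : Matrix (Fin d) (Fin d) ℝ)
    (hV : Vᵀ * V = 1) (hdiag : S = V * Matrix.diagonal lam * Vᵀ)
    (hsorted : Antitone lam) :
    IsGreatest {t : ℝ | ∃ W : Matrix (Fin d) (Fin m) ℝ,
        Wᵀ * W = 1 ∧ t = Matrix.trace (Wᵀ * S * W)}
      (∑ i : Fin m, lam (Fin.castLE hm i)) ∧
    ((V.submatrix id (Fin.castLE hm))ᵀ * V.submatrix id (Fin.castLE hm) = 1 ∧
      Matrix.trace ((V.submatrix id (Fin.castLE hm))ᵀ * S * V.submatrix id (Fin.castLE hm)) =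
        ∑ i : Fin m, lam (Fin.castLE hm i)) ∧
    (∀ (n : ℕ) (X : Matrix (Fin d) (Fin n) ℝ), S = X * centMat n * Xᵀ →
      IsGreatest {t : ℝ | ∃ W : Matrix (Fin d) (Fin m) ℝ,
          Wᵀ * W = 1 ∧ t = Matrix.trace (Wᵀ * (X * centMat n * Xᵀ) * W)}
        (∑ i : Fin m, lam (Fin.castLE hm i))) := by
  have hVVt : V * Vᵀ = 1 := mul_eq_one_comm.mp hV
  set W₀ := V.submatrix id (Fin.castLE hm)
  have hW₀ : W₀ᵀ * W₀ = 1 := by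
    rw [← Matrix.mul_one W₀ᵀ, transpose_submatrix_mul_mul_submatrix, Matrix.mul_one, hV,
      submatrix_one _ (Fin.castLE_injective hm)]
  have hW₀S : trace (W₀ᵀ * S * W₀) = ∑ i : Fin m, lam (Fin.castLE hm i) := by
    have hVSV : Vᵀ * S * V = diagonal lam := by
      rw [hdiag, ← Matrix.mul_assoc, ← Matrix.mul_assoc, hV, Matrix.one_mul, Matrix.mul_assoc, hV,
        Matrix.mul_one]
    rw [transpose_submatrix_mul_mul_submatrix, hVSV,
      submatrix_diagonal _ _ (Fin.castLE_injective hm), trace_diagonal]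
    rfl
  have hmax : IsGreatest {t : ℝ | ∃ W : Matrix (Fin d) (Fin m) ℝ,
      Wᵀ * W = 1 ∧ t = trace (Wᵀ * S * W)} (∑ i : Fin m, lam (Fin.castLE hm i)) := by
    refine ⟨⟨W₀, hW₀, hW₀S.symm⟩, ?_⟩
    rintro t ⟨W, hW, rfl⟩
    have hU : (Vᵀ * W)ᵀ * (Vᵀ * W) = 1 := by
      rw [transpose_mul, transpose_transpose, Matrix.mul_assoc, ← Matrix.mul_assoc V, hVVt,
        Matrix.one_mul, hW]
    calc trace (Wᵀ * S * W) = trace ((Vᵀ * W)ᵀ * diagonal lam * (Vᵀ * W)) := by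
          rw [hdiag, transpose_mul, transpose_transpose]
          simp only [Matrix.mul_assoc]
      _ ≤ _ := trace_transpose_mul_diagonal_mul_le_sum_castLE hm1 hm hsorted hU
  exact ⟨hmax, ⟨hW₀, hW₀S⟩, fun n X hX => hX ▸ hmax⟩

/-- Ky Fan / PCA optimality: for a symmetric `S = V (diag lam) Vᵀ` with `V` orthogonal and
eigenvalues `lam` in decreasing order, the maximum of `tr(WᵀSW)` over `W` with `WᵀW = I_m`
is the sum of the `m` largest eigenvalues, attained at the first `m` columns of `V`
(i.e. `m` orthonormal eigenvectors for the `m` largest eigenvalues). In particular this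
solves the PCA problem for the total scatter matrix `S = XHXᵀ`. -/
theorem ky_fan_pca (d m : ℕ) (hm1 : 1 ≤ m) (hm : m ≤ d)
    (S : Matrix (Fin d) (Fin d) ℝ) (hS : S.IsSymm)
    (lam : Fin d → ℝ) (V : Matrix (Fin d) (Fin d) ℝ)
    (hV : Vᵀ * V = 1) (hdiag : S = V * Matrix.diagonal lam * Vᵀ)
    (hsorted : Antitone lam) :
    IsGreatest {t : ℝ | ∃ W : Matrix (Fin d) (Fin m) ℝ,
        Wᵀ * W = 1 ∧ t = Matrix.trace (Wᵀ * S * W)}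
      (∑ i : Fin m, lam (Fin.castLE hm i)) ∧
    ((V.submatrix id (Fin.castLE hm))ᵀ * V.submatrix id (Fin.castLE hm) = 1 ∧
      Matrix.trace ((V.submatrix id (Fin.castLE hm))ᵀ * S * V.submatrix id (Fin.castLE hm)) =
        ∑ i : Fin m, lam (Fin.castLE hm i)) ∧
    (∀ (n : ℕ) (X : Matrix (Fin d) (Fin n) ℝ), S = X * centMat n * Xᵀ →
      IsGreatest {t : ℝ | ∃ W : Matrix (Fin d) (Fin m) ℝ,
          Wᵀ * W = 1 ∧ t = Matrix.trace (Wᵀ * (X * centMat n * Xᵀ) * W)}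
        (∑ i : Fin m, lam (Fin.castLE hm i))) :=
  ky_fan_pca_general d m hm1 hm S lam V hV hdiag hsorted
end

section
/- Let X ∈ ℝ^{d×n}, H = I_n - (1/n)·N the centralisation matrix, W ∈ ℝ^{d×m} such that S = WᵀXHXᵀW is positive definite, and let G ∈ ℝ^{n×c} be a cluster-indicator matrix (so GᵀG is invertible). Then the minimum over M ∈ ℝ^{m×c} of ‖S^{-1/2}WᵀXH - MGᵀ‖_F² equals tr(S^{-1}·WᵀXH(I_n - G(GᵀG)^{-1}Gᵀ)HXᵀW), attained at M = S^{-1/2}WᵀXHG(GᵀG)^{-1}. Hence, for fixed W, minimizing the trace ratio tr(S^{-1}·WᵀXH(I_n - G(GᵀG)^{-1}Gᵀ)HXᵀW) over cluster-indicator matrices G is equivalent to the K-means-like problem min_{G,M} ‖S^{-1/2}WᵀXH - MGᵀ‖_F². -/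
open Matrix

/-- The Frobenius norm of a real matrix. -/
noncomputable def frobNorm {d n : ℕ} (A : Matrix (Fin d) (Fin n) ℝ) : ℝ :=
  Real.sqrt (∑ i, ∑ j, |A i j| ^ 2)

/-- The positive semidefinite square root of a positive semidefinite matrix
(the Mathlib definition of December 2024, since removed). -/
noncomputable def Matrix.PosSemidef.sqrt {n : Type*} [Fintype n] [DecidableEq n]
    {A : Matrix n n ℝ} (hA : A.PosSemidef) : Matrix n n ℝ :=
  hA.1.eigenvectorUnitary.1 * diagonal ((↑) ∘ (√·) ∘ hA.1.eigenvalues) *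
    (star hA.1.eigenvectorUnitary : Matrix n n ℝ)

/-- A cluster-indicator matrix: entries in `{0,1}`, each row sums to `1`,
each column is nonzero. -/
def IsClusterIndicator {n c : ℕ} (G : Matrix (Fin n) (Fin c) ℝ) : Prop :=
  (∀ i j, G i j = 0 ∨ G i j = 1) ∧ (∀ i, ∑ j, G i j = 1) ∧ (∀ j, ∃ i, G i j ≠ 0)

/-!
For `G` with `GᵀG` invertible, `P = G(GᵀG)⁻¹Gᵀ` is a symmetric idempotent with `GᵀP = Gᵀ`.
Hence `(A - MGᵀ)(1 - P) = A(1 - P)` for every `M`, and splitting `Y = A - MGᵀ` along `1 - P` and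
`P` gives `‖A - MGᵀ‖² = tr(A(1 - P)Aᵀ) + ‖(A - MGᵀ)P‖²`; the second term vanishes at
`M = AG(GᵀG)⁻¹`. For `A = S^{-1/2}WᵀXH`, cyclicity of the trace and symmetry of `H` and `S^{1/2}`
turn `tr(A(1 - P)Aᵀ)` into `tr(S⁻¹WᵀXH(1 - P)HXᵀW)`. For a cluster indicator, `GᵀG` is the
diagonal matrix of the (positive) cluster sizes.
-/

namespace IsClusterIndicator

variable {n c : ℕ} {G : Matrix (Fin n) (Fin c) ℝ} (hG : IsClusterIndicator G)
include hG

theorem nonneg (i : Fin n) (j : Fin c) : 0 ≤ G i j := by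
  rcases hG.1 i j with h | h <;> simp [h]

theorem mul_self (i : Fin n) (j : Fin c) : G i j * G i j = G i j := by
  rcases hG.1 i j with h | h <;> simp [h]

theorem mul_eq_zero_of_ne (i : Fin n) {a b : Fin c} (hab : a ≠ b) : G i a * G i b = 0 := by
  have hpair : G i a + G i b ≤ 1 := by
    rw [← hG.2.1 i, ← Finset.sum_pair hab]
    exact Finset.sum_le_sum_of_subset_of_nonneg (Finset.subset_univ _)
      fun j _ _ => hG.nonneg i j
  rcases hG.1 i a with ha | ha
  · rw [ha, zero_mul]
  rcases hG.1 i b with hb | hb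
  · rw [hb, mul_zero]
  linarith

theorem transpose_mul_self : Gᵀ * G = diagonal fun j => ∑ i, G i j := by
  ext a b
  by_cases hab : a = b
  · subst hab
    simp only [mul_apply, transpose_apply, diagonal_apply_eq, hG.mul_self]
  · simp only [mul_apply, transpose_apply, diagonal_apply_ne _ hab, hG.mul_eq_zero_of_ne _ hab,
      Finset.sum_const_zero]

theorem isUnit_det_transpose_mul_self : IsUnit (Gᵀ * G).det := by
  rw [hG.transpose_mul_self, det_diagonal, isUnit_iff_ne_zero, Finset.prod_ne_zero_iff]
  intro j _
  obtain ⟨i, hi⟩ := hG.2.2 j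
  exact (lt_of_lt_of_le (lt_of_le_of_ne (hG.nonneg i j) hi.symm)
    (Finset.single_le_sum (fun k _ => hG.nonneg k j) (Finset.mem_univ i))).ne'

end IsClusterIndicator

section GramProjection

variable {R : Type*} [CommRing R] {m n c : Type*} [Fintype n] [Fintype c] [DecidableEq c]

/-- The orthogonal projection onto the column space of `G` when `GᵀG` is invertible. -/
noncomputable def gramProj (G : Matrix n c R) : Matrix n n R :=
  G * (Gᵀ * G)⁻¹ * Gᵀ

theorem gramProj_transpose (G : Matrix n c R) : (gramProj G)ᵀ = gramProj G := by
  simp only [gramProj, transpose_mul, transpose_transpose, transpose_nonsing_inv,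
    Matrix.mul_assoc]

theorem one_sub_gramProj_transpose [DecidableEq n] (G : Matrix n c R) :
    (1 - gramProj G)ᵀ = 1 - gramProj G := by
  rw [transpose_sub, transpose_one, gramProj_transpose]

variable {G : Matrix n c R} (hG : IsUnit (Gᵀ * G).det)
include hG

theorem gramProj_mul : gramProj G * G = G := by
  simp only [gramProj, Matrix.mul_assoc, nonsing_inv_mul _ hG, Matrix.mul_one]

theorem transpose_mul_gramProj : Gᵀ * gramProj G = Gᵀ := by
  simpa only [gramProj_transpose, transpose_mul, transpose_transpose] using
    congrArg transpose (gramProj_mul hG)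

theorem isIdempotentElem_gramProj : IsIdempotentElem (gramProj G) := by
  show gramProj G * gramProj G = gramProj G
  nth_rw 1 [gramProj]
  rw [Matrix.mul_assoc, transpose_mul_gramProj hG, gramProj]

theorem sub_mul_transpose_mul_one_sub_gramProj [DecidableEq n] (A : Matrix m n R)
    (M : Matrix m c R) : (A - M * Gᵀ) * (1 - gramProj G) = A * (1 - gramProj G) := by
  rw [Matrix.sub_mul, Matrix.mul_assoc M, Matrix.mul_sub Gᵀ, transpose_mul_gramProj hG,
    Matrix.mul_one, sub_self, Matrix.mul_zero, sub_zero]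

end GramProjection

theorem Matrix.trace_mul_mul_transpose_of_isIdempotentElem {R : Type*} [CommRing R]
    {m n : Type*} [Fintype m] [Fintype n] {P : Matrix n n R} (hP : IsIdempotentElem P)
    (hPT : Pᵀ = P) (Y : Matrix m n R) : trace (Y * P * Yᵀ) = trace (Y * P * (Y * P)ᵀ) := by
  rw [transpose_mul, hPT, ← Matrix.mul_assoc, Matrix.mul_assoc Y P P, hP.eq]

theorem Matrix.trace_mul_transpose_self_nonneg {m n : Type*} [Fintype m] [Fintype n]
    (A : Matrix m n ℝ) : 0 ≤ trace (A * Aᵀ) := by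
  simpa only [conjTranspose_eq_transpose_of_trivial] using
    (posSemidef_self_mul_conjTranspose A).trace_nonneg

section LeastSquares

variable {m n c : ℕ}

theorem frobNorm_sq (A : Matrix (Fin m) (Fin n) ℝ) : frobNorm A ^ 2 = trace (A * Aᵀ) := by
  rw [frobNorm, Real.sq_sqrt (by positivity)]
  simp [trace, mul_apply, sq]

variable {G : Matrix (Fin n) (Fin c) ℝ} (hG : IsUnit (Gᵀ * G).det)
include hG

theorem frobNorm_sq_sub_mul_transpose (A : Matrix (Fin m) (Fin n) ℝ)
    (M : Matrix (Fin m) (Fin c) ℝ) :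
    frobNorm (A - M * Gᵀ) ^ 2 = trace (A * (1 - gramProj G) * Aᵀ) +
      trace ((A - M * Gᵀ) * gramProj G * ((A - M * Gᵀ) * gramProj G)ᵀ) := by
  have hP := isIdempotentElem_gramProj hG
  set Y := A - M * Gᵀ
  have hsplit : trace (Y * Yᵀ) =
      trace (Y * (1 - gramProj G) * Yᵀ) + trace (Y * gramProj G * Yᵀ) := by
    rw [← trace_add, ← Matrix.add_mul, ← Matrix.mul_add, sub_add_cancel, Matrix.mul_one]
  rw [frobNorm_sq, hsplit,
    trace_mul_mul_transpose_of_isIdempotentElem hP.one_sub (one_sub_gramProj_transpose G),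
    sub_mul_transpose_mul_one_sub_gramProj hG,
    ← trace_mul_mul_transpose_of_isIdempotentElem hP.one_sub (one_sub_gramProj_transpose G),
    trace_mul_mul_transpose_of_isIdempotentElem hP (gramProj_transpose G)]

theorem frobNorm_sq_sub_mul_gram_inv_mul_transpose (A : Matrix (Fin m) (Fin n) ℝ) :
    frobNorm (A - A * G * (Gᵀ * G)⁻¹ * Gᵀ) ^ 2 = trace (A * (1 - gramProj G) * Aᵀ) := by
  have hfit : A - A * G * (Gᵀ * G)⁻¹ * Gᵀ = A * (1 - gramProj G) := by
    simp only [Matrix.mul_sub, Matrix.mul_one, gramProj, Matrix.mul_assoc]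
  rw [hfit, frobNorm_sq, trace_mul_mul_transpose_of_isIdempotentElem
    (isIdempotentElem_gramProj hG).one_sub (one_sub_gramProj_transpose G)]

theorem isLeast_frobNorm_sq_sub_mul_transpose (A : Matrix (Fin m) (Fin n) ℝ) :
    IsLeast {v | ∃ M : Matrix (Fin m) (Fin c) ℝ, v = frobNorm (A - M * Gᵀ) ^ 2}
      (trace (A * (1 - gramProj G) * Aᵀ)) := by
  refine ⟨⟨A * G * (Gᵀ * G)⁻¹, (frobNorm_sq_sub_mul_gram_inv_mul_transpose hG A).symm⟩, ?_⟩
  rintro v ⟨M, rfl⟩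
  rw [frobNorm_sq_sub_mul_transpose hG]
  exact le_add_of_nonneg_right (trace_mul_transpose_self_nonneg _)

end LeastSquares

namespace Matrix.PosSemidef

variable {n : Type*} [Fintype n] [DecidableEq n] {A : Matrix n n ℝ} (hA : A.PosSemidef)
include hA

theorem sqrt_mul_self : hA.sqrt * hA.sqrt = A := by
  set U := hA.1.eigenvectorUnitary
  set D : Matrix n n ℝ := diagonal ((↑) ∘ (√·) ∘ hA.1.eigenvalues)
  have hU : (star U : Matrix n n ℝ) * U = 1 := Unitary.star_mul_self_of_mem U.2
  have hDD : D * D = diagonal (RCLike.ofReal ∘ hA.1.eigenvalues) := by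
    rw [diagonal_mul_diagonal]
    congr 1
    funext i
    simp [Real.mul_self_sqrt (hA.eigenvalues_nonneg i)]
  calc hA.sqrt * hA.sqrt
      = U * D * ((star U : Matrix n n ℝ) * U) * D * (star U : Matrix n n ℝ) := by
        simp only [sqrt, U, D, Matrix.mul_assoc]
    _ = A := by
        rw [hU, Matrix.mul_one, Matrix.mul_assoc _ D D, hDD]
        conv_rhs => rw [hA.1.spectral_theorem, Unitary.conjStarAlgAut_apply]

theorem transpose_sqrt : hA.sqrtᵀ = hA.sqrt := by
  simp only [sqrt, transpose_mul, diagonal_transpose, star_eq_conjTranspose,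
    conjTranspose_eq_transpose_of_trivial, transpose_transpose, Matrix.mul_assoc]

theorem trace_inv_sqrt_mul_mul_transpose {m : Type*} [Fintype m] (B : Matrix n m ℝ)
    (K : Matrix m m ℝ) :
    trace (hA.sqrt⁻¹ * B * K * (hA.sqrt⁻¹ * B)ᵀ) = trace (A⁻¹ * (B * K * Bᵀ)) := by
  rw [transpose_mul, transpose_nonsing_inv, hA.transpose_sqrt]
  calc trace (hA.sqrt⁻¹ * B * K * (Bᵀ * hA.sqrt⁻¹))
      = trace (hA.sqrt⁻¹ * B * K * Bᵀ * hA.sqrt⁻¹) := by simp only [Matrix.mul_assoc]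
    _ = trace (hA.sqrt⁻¹ * (hA.sqrt⁻¹ * B * K * Bᵀ)) := trace_mul_comm _ _
    _ = trace ((hA.sqrt * hA.sqrt)⁻¹ * (B * K * Bᵀ)) := by
        simp only [Matrix.mul_inv_rev, Matrix.mul_assoc]
    _ = trace (A⁻¹ * (B * K * Bᵀ)) := by rw [hA.sqrt_mul_self]

end Matrix.PosSemidef

theorem centMat_transpose (n : ℕ) : (centMat n)ᵀ = centMat n := by
  ext i j
  simp [centMat, one_apply, eq_comm]

theorem setOf_isLeast_eq_setOf_minimizer {α β γ : Type*} [PartialOrder γ] {p : α → Prop}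
    {f : α → γ} {g : α → β → γ} (h : ∀ a, p a → IsLeast {v | ∃ b, v = g a b} (f a)) :
    {v | ∃ a, p a ∧ v = f a} = {v | ∃ a b, p a ∧ v = g a b ∧ ∀ b', g a b ≤ g a b'} := by
  ext v
  constructor
  · rintro ⟨a, ha, rfl⟩
    obtain ⟨⟨b, hb⟩, hlower⟩ := h a ha
    exact ⟨a, b, ha, hb, fun b' => hb ▸ hlower ⟨b', rfl⟩⟩
  · rintro ⟨a, b, ha, rfl, hmin⟩
    obtain ⟨⟨b₀, hb₀⟩, hlower⟩ := h a ha
    exact ⟨a, ha, le_antisymm (hb₀ ▸ hmin b₀) (hlower ⟨b, rfl⟩)⟩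

theorem trace_ratio_kmeans_like_general (d n m c : ℕ)
    (X : Matrix (Fin d) (Fin n) ℝ) (W : Matrix (Fin d) (Fin m) ℝ)
    (hS : (Wᵀ * X * centMat n * Xᵀ * W).PosDef) :
    (∀ G : Matrix (Fin n) (Fin c) ℝ, IsClusterIndicator G →
      IsUnit (Gᵀ * G).det ∧
      IsLeast {v : ℝ | ∃ M : Matrix (Fin m) (Fin c) ℝ,
          v = frobNorm ((hS.posSemidef.sqrt)⁻¹ * (Wᵀ * X * centMat n) - M * Gᵀ) ^ 2}
        (Matrix.trace ((Wᵀ * X * centMat n * Xᵀ * W)⁻¹ *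
          (Wᵀ * X * centMat n * (1 - G * (Gᵀ * G)⁻¹ * Gᵀ) * centMat n * Xᵀ * W))) ∧
      frobNorm ((hS.posSemidef.sqrt)⁻¹ * (Wᵀ * X * centMat n) -
          ((hS.posSemidef.sqrt)⁻¹ * (Wᵀ * X * centMat n) * G * (Gᵀ * G)⁻¹) * Gᵀ) ^ 2 =
        Matrix.trace ((Wᵀ * X * centMat n * Xᵀ * W)⁻¹ *
          (Wᵀ * X * centMat n * (1 - G * (Gᵀ * G)⁻¹ * Gᵀ) * centMat n * Xᵀ * W))) ∧
    {v : ℝ | ∃ G : Matrix (Fin n) (Fin c) ℝ, IsClusterIndicator G ∧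
        v = Matrix.trace ((Wᵀ * X * centMat n * Xᵀ * W)⁻¹ *
          (Wᵀ * X * centMat n * (1 - G * (Gᵀ * G)⁻¹ * Gᵀ) * centMat n * Xᵀ * W))} =
    {v : ℝ | ∃ (G : Matrix (Fin n) (Fin c) ℝ) (M : Matrix (Fin m) (Fin c) ℝ),
        IsClusterIndicator G ∧
        v = frobNorm ((hS.posSemidef.sqrt)⁻¹ * (Wᵀ * X * centMat n) - M * Gᵀ) ^ 2 ∧
        ∀ M' : Matrix (Fin m) (Fin c) ℝ,
          frobNorm ((hS.posSemidef.sqrt)⁻¹ * (Wᵀ * X * centMat n) - M * Gᵀ) ^ 2 ≤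
            frobNorm ((hS.posSemidef.sqrt)⁻¹ * (Wᵀ * X * centMat n) - M' * Gᵀ) ^ 2} := by
  refine (fun hfit => ⟨hfit, setOf_isLeast_eq_setOf_minimizer fun G hG => (hfit G hG).2.1⟩)
    fun G hG => ?_
  set B := Wᵀ * X * centMat n
  have htrace : trace ((hS.posSemidef.sqrt)⁻¹ * B * (1 - gramProj G) *
      ((hS.posSemidef.sqrt)⁻¹ * B)ᵀ) =
      trace ((B * Xᵀ * W)⁻¹ * (B * (1 - G * (Gᵀ * G)⁻¹ * Gᵀ) * centMat n * Xᵀ * W)) := by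
    rw [hS.posSemidef.trace_inv_sqrt_mul_mul_transpose]
    simp only [B, gramProj, transpose_mul, transpose_transpose, centMat_transpose,
      Matrix.mul_assoc]
  have hGG := hG.isUnit_det_transpose_mul_self
  rw [← htrace]
  exact ⟨hGG, isLeast_frobNorm_sq_sub_mul_transpose hGG _,
    frobNorm_sq_sub_mul_gram_inv_mul_transpose hGG _⟩

/-- For fixed `W` with `S = WᵀXHXᵀW` positive definite, the minimum over `M` of
`‖S^{-1/2}WᵀXH - MGᵀ‖_F²` equals `tr(S⁻¹·WᵀXH(I - G(GᵀG)⁻¹Gᵀ)HXᵀW)`, attained at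
`M = S^{-1/2}WᵀXHG(GᵀG)⁻¹`; hence minimizing this trace over cluster-indicator
matrices `G` is equivalent to the K-means-like problem. -/
theorem trace_ratio_kmeans_like (d n m c : ℕ) (hn : 1 ≤ n)
    (X : Matrix (Fin d) (Fin n) ℝ) (W : Matrix (Fin d) (Fin m) ℝ)
    (hS : (Wᵀ * X * centMat n * Xᵀ * W).PosDef) :
    (∀ G : Matrix (Fin n) (Fin c) ℝ, IsClusterIndicator G →
      IsUnit (Gᵀ * G).det ∧
      IsLeast {v : ℝ | ∃ M : Matrix (Fin m) (Fin c) ℝ,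
          v = frobNorm ((hS.posSemidef.sqrt)⁻¹ * (Wᵀ * X * centMat n) - M * Gᵀ) ^ 2}
        (Matrix.trace ((Wᵀ * X * centMat n * Xᵀ * W)⁻¹ *
          (Wᵀ * X * centMat n * (1 - G * (Gᵀ * G)⁻¹ * Gᵀ) * centMat n * Xᵀ * W))) ∧
      frobNorm ((hS.posSemidef.sqrt)⁻¹ * (Wᵀ * X * centMat n) -
          ((hS.posSemidef.sqrt)⁻¹ * (Wᵀ * X * centMat n) * G * (Gᵀ * G)⁻¹) * Gᵀ) ^ 2 =
        Matrix.trace ((Wᵀ * X * centMat n * Xᵀ * W)⁻¹ *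
          (Wᵀ * X * centMat n * (1 - G * (Gᵀ * G)⁻¹ * Gᵀ) * centMat n * Xᵀ * W))) ∧
    {v : ℝ | ∃ G : Matrix (Fin n) (Fin c) ℝ, IsClusterIndicator G ∧
        v = Matrix.trace ((Wᵀ * X * centMat n * Xᵀ * W)⁻¹ *
          (Wᵀ * X * centMat n * (1 - G * (Gᵀ * G)⁻¹ * Gᵀ) * centMat n * Xᵀ * W))} =
    {v : ℝ | ∃ (G : Matrix (Fin n) (Fin c) ℝ) (M : Matrix (Fin m) (Fin c) ℝ),
        IsClusterIndicator G ∧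
        v = frobNorm ((hS.posSemidef.sqrt)⁻¹ * (Wᵀ * X * centMat n) - M * Gᵀ) ^ 2 ∧
        ∀ M' : Matrix (Fin m) (Fin c) ℝ,
          frobNorm ((hS.posSemidef.sqrt)⁻¹ * (Wᵀ * X * centMat n) - M * Gᵀ) ^ 2 ≤
            frobNorm ((hS.posSemidef.sqrt)⁻¹ * (Wᵀ * X * centMat n) - M' * Gᵀ) ^ 2} :=
  trace_ratio_kmeans_like_general d n m c X W hS
end
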